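/- arXiv:math/0701284 — 4 statements merged into one kernel-verified Lean document; each statement's English description precedes it below -/
import Mathlib

section
/- The chain (B_n) is almost surely absorbed by the set of constant maps in finite time, i.e. T = inf{n ≥ 0 : B_n is constant} is almost surely finite; moreover the absorbed value is uniformly distributed: for every i ∈ {1,…,N}, the probability that B_T is the constant map with value i equals 1/N. -/
open MeasureTheory

def IsConstMap {N : ℕ} (b : Fin N → Fin N) : Prop := ∃ i, ∀ j, b j = i

/-!
The event `{ω | (A 0 ω, …, A K ω) = v}` has probability `(N ^ N)⁻¹ ^ (K + 1)` for every word `v`,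
so every event decided by `B 0, …, B K` is bounded by a count of words. A word with a constant
letter `a m` makes `B m` constant, so the chain survives `K + 1` steps with probability at most
`(1 - N / N ^ N) ^ (K + 1)`. Replacing the letter `a n` by `(i i') ∘ a n` leaves `B 0, …, B (n - 1)`
unchanged and turns `B n` into `(i i') ∘ B n`; hence the number of words first absorbed at time
`n` in the constant `i` does not depend on `i`, which gives `P(B T ≡ i) ≤ 1 / N`. These `N` events
cover the almost sure event of absorption, so each has probability exactly `1 / N`. The maps `A p`
are not assumed measurable, so only subadditivity of `P` is used.
-/

open scoped ENNReal
open Finset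

theorem Fin.ofNat_eq_mk {n a : ℕ} [NeZero n] (h : a < n) : Fin.ofNat n a = ⟨a, h⟩ :=
  Fin.ext (Nat.mod_eq_of_lt h)

section Cover

variable {Ω : Type*} [MeasurableSpace Ω] {P : Measure Ω}

theorem measure_le_card_mul_of_forall_mem {T : Type*} (Y : Ω → T) {r : ℝ≥0∞}
    (hfiber : ∀ t, P {ω | Y ω = t} ≤ r) {S : Set Ω} {V : Finset T} (hS : ∀ ω ∈ S, Y ω ∈ V) :
    P S ≤ #V * r :=
  calc P S ≤ P (⋃ t ∈ V, {ω | Y ω = t}) := measure_mono fun ω hω => Set.mem_biUnion (hS ω hω) rfl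
    _ ≤ ∑ t ∈ V, P {ω | Y ω = t} := measure_biUnion_finset_le _ _
    _ ≤ ∑ _t ∈ V, r := sum_le_sum fun t _ => hfiber t
    _ = #V * r := by rw [sum_const, nsmul_eq_mul]

theorem measure_prefix_eq_pow {M : Type*} {X : ℕ → Ω → M} {q : ℝ≥0∞}
    (hunif : ∀ p a, P {ω | X p ω = a} = q)
    (hindep : ∀ (s : Finset ℕ) (a : ℕ → M),
      P {ω | ∀ p ∈ s, X p ω = a p} = ∏ p ∈ s, P {ω | X p ω = a p})
    (K : ℕ) (v : Fin (K + 1) → M) :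
    P {ω | (fun p : Fin (K + 1) => X p ω) = v} = q ^ (K + 1) := by
  have hset : {ω | (fun p : Fin (K + 1) => X p ω) = v} =
      {ω | ∀ p ∈ range (K + 1), X p ω = v (Fin.ofNat (K + 1) p)} := by
    ext ω
    simp only [Set.mem_ofPred_eq, funext_iff, mem_range, Fin.forall_iff]
    exact forall₂_congr fun p hp => by rw [Fin.ofNat_eq_mk hp]
  rw [hset, hindep, prod_congr rfl fun p _ => hunif p _, prod_const, card_range]

end Cover

theorem ENNReal.eq_inv_card_of_forall_le_of_one_le_sum {ι : Type*} [Fintype ι] {f : ι → ℝ≥0∞}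
    (hf : ∀ i, f i ≤ (Fintype.card ι : ℝ≥0∞)⁻¹) (hsum : 1 ≤ ∑ i, f i) (i : ι) :
    f i = (Fintype.card ι : ℝ≥0∞)⁻¹ := by
  set c := (Fintype.card ι : ℝ≥0∞)⁻¹
  have hcard : (Fintype.card ι : ℝ≥0∞) ≠ 0 := by simpa using (Fintype.card_pos_iff.mpr ⟨i⟩).ne'
  refine (hf i).antisymm (not_lt.mp fun hlt => hsum.not_gt ?_)
  classical
  calc ∑ j, f j = f i + ∑ j ∈ univ.erase i, f j := (add_sum_erase _ _ (mem_univ i)).symm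
    _ < c + ∑ _j ∈ univ.erase i, c :=
        ENNReal.add_lt_add_of_lt_of_le
          (ENNReal.sum_ne_top.mpr fun j _ =>
            ne_top_of_le_ne_top (ENNReal.inv_ne_top.mpr hcard) (hf j))
          hlt (sum_le_sum fun j _ => hf j)
    _ = ∑ _j, c := add_sum_erase _ (fun _ => c) (mem_univ i)
    _ = 1 := by
        rw [sum_const, card_univ, nsmul_eq_mul,
          ENNReal.mul_inv_cancel hcard (ENNReal.natCast_ne_top _)]

section Chain

variable {α : Type*}

def compChain (a : ℕ → α → α) : ℕ → α → α
  | 0 => a 0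
  | n + 1 => a (n + 1) ∘ compChain a n

theorem compChain_congr {a b : ℕ → α → α} :
    ∀ {n : ℕ}, (∀ p ≤ n, a p = b p) → compChain a n = compChain b n
  | 0, h => h 0 le_rfl
  | n + 1, h => by
      rw [compChain, compChain, h (n + 1) le_rfl,
        compChain_congr fun p hp => h p (hp.trans n.le_succ)]

theorem compChain_eq_comp_of_eq_comp {a b : ℕ → α → α} (σ : α → α) {n : ℕ}
    (hlt : ∀ p < n, b p = a p) (hn : b n = σ ∘ a n) : compChain b n = σ ∘ compChain a n := by
  cases n with
  | zero => exact hn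
  | succ n =>
      rw [compChain, compChain, hn, compChain_congr fun p hp => hlt p (Nat.lt_succ_of_le hp)]
      rfl

theorem compChain_finOfNat (a : ℕ → α → α) {K m : ℕ} (hm : m ≤ K) :
    compChain (fun p : ℕ => a (Fin.ofNat (K + 1) p)) m = compChain a m :=
  compChain_congr fun p hp => by rw [Fin.ofNat_eq_mk (by omega)]

end Chain

section HitsConst

variable {N : ℕ} {b b' : ℕ → Fin N → Fin N} {n n' : ℕ} {i i' : Fin N}

theorem isConstMap_compChain {a : ℕ → Fin N → Fin N} (h : IsConstMap (a n)) :
    IsConstMap (compChain a n) := by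
  obtain ⟨i, hi⟩ := h
  cases n with
  | zero => exact ⟨i, hi⟩
  | succ n => exact ⟨i, fun j => hi _⟩

def HitsConstAt (b : ℕ → Fin N → Fin N) (n : ℕ) (i : Fin N) : Prop :=
  (∀ m < n, ¬ IsConstMap (b m)) ∧ ∀ j, b n j = i

theorem HitsConstAt.unique (h : HitsConstAt b n i) (h' : HitsConstAt b n' i') :
    n = n' ∧ i = i' := by
  obtain rfl : n = n' := by
    by_contra hne
    rcases Nat.lt_or_gt_of_ne hne with hlt | hlt
    exacts [h'.1 n hlt ⟨i, h.2⟩, h.1 n' hlt ⟨i', h'.2⟩]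
  exact ⟨rfl, (h.2 i).symm.trans (h'.2 i)⟩

theorem exists_hitsConstAt (h : ∃ n, IsConstMap (b n)) : ∃ i n, HitsConstAt b n i := by
  classical
  obtain ⟨i, hi⟩ := Nat.find_spec h
  exact ⟨i, Nat.find h, fun m hm => Nat.find_min h hm, hi⟩

theorem hitsConstAt_congr (h : ∀ m ≤ n, b m = b' m) :
    HitsConstAt b n i ↔ HitsConstAt b' n i := by
  unfold HitsConstAt
  rw [h n le_rfl]
  exact and_congr_left' (forall₂_congr fun m hm => by rw [h m hm.le])

theorem hitsConstAt_perm_iff (σ : Equiv.Perm (Fin N)) (hlt : ∀ m < n, b' m = b m)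
    (hn : b' n = σ ∘ b n) : HitsConstAt b' n (σ i) ↔ HitsConstAt b n i := by
  simp only [HitsConstAt, hn, Function.comp_apply, σ.injective.eq_iff]
  exact and_congr_left' (forall₂_congr fun m hm => by rw [hlt m hm])

end HitsConst

section Counting

variable {N : ℕ}

open Classical in
/-- A word `v` is read as the sequence `p ↦ v (p mod (K + 1))`, so only `n ≤ K` is meaningful. -/
noncomputable def hitSet (K n : ℕ) (i : Fin N) : Finset (Fin (K + 1) → Fin N → Fin N) :=
  univ.filter fun v => HitsConstAt (compChain fun p => v (Fin.ofNat (K + 1) p)) n i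

theorem mem_hitSet_of_hitsConstAt {a : ℕ → Fin N → Fin N} {K n : ℕ} {i : Fin N} (hn : n ≤ K)
    (h : HitsConstAt (compChain a) n i) : (fun p : Fin (K + 1) => a p) ∈ hitSet K n i := by
  classical
  simp only [hitSet, mem_filter, mem_univ, true_and]
  exact (hitsConstAt_congr fun m hm => (compChain_finOfNat a (hm.trans hn)).symm).mp h

theorem card_hitSet_perm (σ : Equiv.Perm (Fin N)) {K n : ℕ} (hn : n ≤ K) (i : Fin N) :
    #(hitSet K n (σ i)) = #(hitSet K n i) := by
  classical
  set k : Fin (K + 1) := ⟨n, Nat.lt_succ_of_le hn⟩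
  let g (τ : Equiv.Perm (Fin N)) (v : Fin (K + 1) → Fin N → Fin N) :=
    Function.update v k (τ ∘ v k)
  have hmem : ∀ τ i v, g τ v ∈ hitSet K n (τ i) ↔ v ∈ hitSet K n i := by
    intro τ i v
    simp only [hitSet, mem_filter, mem_univ, true_and]
    have hagree : ∀ p < n, g τ v (Fin.ofNat (K + 1) p) = v (Fin.ofNat (K + 1) p) := by
      intro p hp
      rw [Fin.ofNat_eq_mk (by omega)]
      exact Function.update_of_ne (fun h => by simp [k] at h; omega) _ _
    have hat : g τ v (Fin.ofNat (K + 1) n) = τ ∘ v (Fin.ofNat (K + 1) n) := by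
      rw [Fin.ofNat_eq_mk (by omega)]
      exact Function.update_self _ _ _
    exact hitsConstAt_perm_iff τ
      (fun m hm => compChain_congr fun p hp => hagree p (by omega))
      (compChain_eq_comp_of_eq_comp τ hagree hat)
  have hinv : ∀ (τ : Equiv.Perm (Fin N)) v, g τ⁻¹ (g τ v) = v := by
    intro τ v
    simp [g, ← Function.comp_assoc]
  refine card_nbij' (g σ⁻¹) (g σ) (fun v hv => ?_) (fun v hv => (hmem σ i v).mpr hv)
    (fun v _ => by simpa using hinv σ⁻¹ v) (fun v _ => hinv σ v)
  simpa using (hmem σ⁻¹ (σ i) v).mpr hv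

theorem mul_sum_card_hitSet_le (K : ℕ) (i : Fin N) :
    N * ∑ n ∈ range (K + 1), #(hitSet K n i) ≤ (N ^ N) ^ (K + 1) := by
  classical
  calc N * ∑ n ∈ range (K + 1), #(hitSet K n i)
      = ∑ x ∈ range (K + 1) ×ˢ univ, #(hitSet K x.1 x.2) := by
        rw [mul_sum, sum_product]
        refine sum_congr rfl fun n hn => ?_
        have hnK : n ≤ K := Nat.lt_succ_iff.mp (mem_range.mp hn)
        rw [sum_congr rfl fun i' _ => show #(hitSet K n i') = #(hitSet K n i) by
            rw [← card_hitSet_perm (Equiv.swap i i') hnK i, Equiv.swap_apply_left],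
          sum_const, card_univ, Fintype.card_fin, smul_eq_mul]
    _ = #((range (K + 1) ×ˢ univ).biUnion fun x => hitSet K x.1 x.2) := by
        refine (card_biUnion fun x _ y _ hxy => disjoint_left.mpr fun v hvx hvy => hxy ?_).symm
        simp only [hitSet, mem_filter, mem_univ, true_and] at hvx hvy
        obtain ⟨h1, h2⟩ := hvx.unique hvy
        exact Prod.ext h1 h2
    _ ≤ (N ^ N) ^ (K + 1) := (card_le_univ _).trans (by simp)

open Classical in
theorem card_filter_not_isConstMap_lt (hN : 1 ≤ N) :
    #(univ.filter fun f : Fin N → Fin N => ¬ IsConstMap f) < N ^ N := by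
  have hconst : IsConstMap fun _ : Fin N => (⟨0, hN⟩ : Fin N) := ⟨_, fun _ => rfl⟩
  refine (card_lt_univ_of_notMem (x := fun _ => ⟨0, hN⟩) ?_).trans_eq (by simp)
  simpa using hconst

end Counting

section RandomMaps

variable {N : ℕ} {Ω : Type*} [MeasurableSpace Ω] {P : Measure Ω} {A : ℕ → Ω → Fin N → Fin N}

theorem measure_forall_not_isConstMap_compChain_eq_zero (hN : 1 ≤ N)
    (hprefix : ∀ K (v : Fin (K + 1) → Fin N → Fin N),
      P {ω | (fun p : Fin (K + 1) => A p ω) = v} ≤ ((N : ℝ≥0∞) ^ N)⁻¹ ^ (K + 1)) :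
    P {ω | ∀ n, ¬ IsConstMap (compChain (A · ω) n)} = 0 := by
  classical
  set nonconst : Finset (Fin N → Fin N) := univ.filter fun f => ¬ IsConstMap f
  set c : ℝ≥0∞ := #nonconst * ((N : ℝ≥0∞) ^ N)⁻¹ with hc_def
  have hc : c < 1 := by
    rw [hc_def, ← div_eq_mul_inv, ENNReal.div_lt_iff (by simp) (by simp), one_mul]
    exact_mod_cast card_filter_not_isConstMap_lt hN
  have hbound : ∀ K, P {ω | ∀ n, ¬ IsConstMap (compChain (A · ω) n)} ≤ c ^ (K + 1) := fun K =>
    calc _ ≤ #(Fintype.piFinset fun _ : Fin (K + 1) => nonconst) * ((N : ℝ≥0∞) ^ N)⁻¹ ^ (K + 1) :=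
          measure_le_card_mul_of_forall_mem (fun ω (p : Fin (K + 1)) => A p ω) (hprefix K)
            fun ω hω => Fintype.mem_piFinset.mpr fun p => by
              simpa [nonconst] using fun h => hω p (isConstMap_compChain h)
      _ = c ^ (K + 1) := by
          rw [Fintype.card_piFinset, prod_const, card_univ, Fintype.card_fin, hc_def, mul_pow]
          push_cast
          rfl
  exact le_zero_iff.mp <| ge_of_tendsto' ((ENNReal.tendsto_pow_atTop_nhds_zero_of_lt_one hc).comp
    (Filter.tendsto_add_atTop_nat 1)) hbound

theorem measure_exists_hitsConstAt_compChain_le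
    (hprefix : ∀ K (v : Fin (K + 1) → Fin N → Fin N),
      P {ω | (fun p : Fin (K + 1) => A p ω) = v} ≤ ((N : ℝ≥0∞) ^ N)⁻¹ ^ (K + 1)) (i : Fin N) :
    P {ω | ∃ n, HitsConstAt (compChain (A · ω)) n i} ≤ (N : ℝ≥0∞)⁻¹ := by
  have hK : ∀ K, ∑ n ∈ range (K + 1), P {ω | HitsConstAt (compChain (A · ω)) n i} ≤
      (N : ℝ≥0∞)⁻¹ := fun K =>
    calc _ ≤ ∑ n ∈ range (K + 1), (#(hitSet K n i) : ℝ≥0∞) * ((N : ℝ≥0∞) ^ N)⁻¹ ^ (K + 1) :=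
          sum_le_sum fun n hn => measure_le_card_mul_of_forall_mem _ (hprefix K) fun _ =>
            mem_hitSet_of_hitsConstAt (Nat.lt_succ_iff.mp (mem_range.mp hn))
      _ = (∑ n ∈ range (K + 1), #(hitSet K n i) : ℕ) * ((N : ℝ≥0∞) ^ N)⁻¹ ^ (K + 1) := by
          push_cast
          rw [sum_mul]
      _ ≤ (N : ℝ≥0∞)⁻¹ := by
          rw [ENNReal.le_inv_iff_mul_le, ← ENNReal.inv_pow, mul_right_comm, ← div_eq_mul_inv,
            ENNReal.div_le_iff (by simp) (by simp), one_mul, mul_comm]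
          exact_mod_cast mul_sum_card_hitSet_le K i
  calc P {ω | ∃ n, HitsConstAt (compChain (A · ω)) n i}
      = P (⋃ n, {ω | HitsConstAt (compChain (A · ω)) n i}) := by rw [Set.ofPred_exists]
    _ ≤ ∑' n, P {ω | HitsConstAt (compChain (A · ω)) n i} := measure_iUnion_le _
    _ = ⨆ K, ∑ n ∈ range (K + 1), P {ω | HitsConstAt (compChain (A · ω)) n i} :=
        ENNReal.tsum_eq_iSup_nat' (Filter.tendsto_add_atTop_nat 1)
    _ ≤ (N : ℝ≥0∞)⁻¹ := iSup_le hK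

end RandomMaps

/-- The chain `(B_n)` of composed i.i.d. uniform random maps on `{1,…,N}` is almost surely
absorbed by the set of constant maps in finite time, and the absorbed value `B_T` (taken at the
first time `T` at which `B` is constant) is uniformly distributed: for every `i`, the probability
that `B_T` is the constant map with value `i` equals `1/N`. -/
theorem absorption_and_uniform_entrance
    (N : ℕ) (hN : 1 ≤ N)
    {Ω : Type*} [MeasurableSpace Ω] (P : Measure Ω) [IsProbabilityMeasure P]
    (A B : ℕ → Ω → (Fin N → Fin N))
    -- each `A p` is uniformly distributed on the set `𝒜` of maps, which has `N ^ N` elements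
    (hunif : ∀ (p : ℕ) (a : Fin N → Fin N), P {ω | A p ω = a} = ((N : ENNReal) ^ N)⁻¹)
    -- the maps `(A p)` are independent
    (hindep : ∀ (s : Finset ℕ) (a : ℕ → (Fin N → Fin N)),
      P {ω | ∀ p ∈ s, A p ω = a p} = ∏ p ∈ s, P {ω | A p ω = a p})
    -- `B 0 = A 0` and `B (n+1) = A (n+1) ∘ B n`
    (hB0 : ∀ ω, B 0 ω = A 0 ω)
    (hBs : ∀ n ω, B (n + 1) ω = A (n + 1) ω ∘ B n ω) :
    P {ω | ∃ n, IsConstMap (B n ω)} = 1 ∧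
    ∀ i : Fin N,
      P {ω | ∃ n, (∀ m < n, ¬ IsConstMap (B m ω)) ∧ ∀ j, B n ω j = i} = (N : ENNReal)⁻¹ := by
  obtain rfl : B = fun n ω => compChain (A · ω) n := by
    funext n ω
    induction n with
    | zero => exact hB0 ω
    | succ n ih => rw [hBs, ih]; rfl
  have hprefix K v := (measure_prefix_eq_pow hunif hindep K v).le
  have habsorb : P {ω | ∃ n, IsConstMap (compChain (A · ω) n)} = 1 := by
    rw [← measure_univ (μ := P)]
    refine measure_congr (ae_eq_univ.mpr ?_)
    simpa only [Set.compl_ofPred, not_exists] using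
      measure_forall_not_isConstMap_compChain_eq_zero hN hprefix
  refine ⟨habsorb, fun i => ?_⟩
  have hcover : 1 ≤ ∑ i, P {ω | ∃ n, HitsConstAt (compChain (A · ω)) n i} :=
    calc 1 = P {ω | ∃ n, IsConstMap (compChain (A · ω) n)} := habsorb.symm
      _ ≤ P (⋃ i, {ω | ∃ n, HitsConstAt (compChain (A · ω)) n i}) :=
          measure_mono fun ω hω => Set.mem_iUnion.mpr (exists_hitsConstAt hω)
      _ ≤ _ := measure_iUnion_fintype_le _ _
  have huniform := ENNReal.eq_inv_card_of_forall_le_of_one_le_sum (by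
    simpa only [Fintype.card_fin] using measure_exists_hitsConstAt_compChain_le hprefix) hcover i
  rwa [Fintype.card_fin] at huniform
end

section
/- For every n ≥ 0 and every sequence (c_0,…,c_n) of maps in 𝒜 that is weakly decreasing (for each 0 ≤ p < n there exists b ∈ 𝒜 with c_{p+1} = b ∘ c_p), such that c_p is not constant for all 0 ≤ p < n and c_n is constant, one has P(T = n and (B_0, B_1, …, B_n) = (c_0, c_1, …, c_n)) = N^{−(N + |c| − 1)}, where |c| := Σ_{p=0}^n |c_p({1,…,N})| is the total number of image points of the sequence. -/
open MeasureTheory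

lemma card_agree (N : ℕ) (S : Finset (Fin N)) (f : Fin N → Fin N) :
    (Finset.univ.filter (fun a : Fin N → Fin N => ∀ x ∈ S, a x = f x)).card
      = N ^ (N - S.card) := by
  classical
  rw [← Fintype.card_subtype]
  have e : {a : Fin N → Fin N // ∀ x ∈ S, a x = f x} ≃ ({x : Fin N // x ∉ S} → Fin N) :=
    { toFun := fun a x => a.1 x.1
      invFun := fun g => ⟨fun x => if h : x ∈ S then f x else g ⟨x, h⟩,
        fun x hx => dif_pos hx⟩
      left_inv := by
        rintro ⟨a, ha⟩
        ext x
        by_cases h : x ∈ S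
        · simp [dif_pos h, ha x h]
        · simp [dif_neg h]
      right_inv := by
        intro g
        ext x
        simp [dif_neg x.2] }
  rw [Fintype.card_congr e, Fintype.card_fun, Fintype.card_fin]
  congr 1
  rw [Fintype.card_subtype_compl, Fintype.card_fin]
  congr 1
  exact Fintype.card_coe S

lemma prob_pi (N : ℕ)
    {Ω : Type*} [MeasurableSpace Ω] (P : Measure Ω) [IsProbabilityMeasure P]
    (A : ℕ → Ω → (Fin N → Fin N))
    (hunif : ∀ (p : ℕ) (a : Fin N → Fin N), P {ω | A p ω = a} = ((N : ENNReal) ^ N)⁻¹)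
    (hindep : ∀ (s : Finset ℕ) (a : ℕ → (Fin N → Fin N)),
      P {ω | ∀ p ∈ s, A p ω = a p} = ∏ p ∈ s, P {ω | A p ω = a p})
    (n : ℕ) (D : ℕ → Finset (Fin N → Fin N)) :
    P {ω | ∀ p < n + 1, A p ω ∈ D p} =
      (∏ p ∈ Finset.range (n + 1), ((D p).card : ENNReal)) *
        (((N : ENNReal) ^ N)⁻¹) ^ (n + 1) := by
  classical
  have hNne : (N : ENNReal) ^ N ≠ 0 := by
    rcases Nat.eq_zero_or_pos N with h | h
    · subst h; simp
    · positivity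
  have hNnetop : (N : ENNReal) ^ N ≠ ⊤ :=
    ENNReal.pow_ne_top (ENNReal.natCast_ne_top N)
  set m := n + 1 with hm
  set q : ENNReal := ((N : ENNReal) ^ N)⁻¹ with hq
  set E : (Fin m → (Fin N → Fin N)) → Set Ω :=
    fun g => {ω | ∀ p : Fin m, A p ω = g p} with hE
  have hPE : ∀ g, P (E g) = q ^ m := by
    intro g
    have hg0 : (0 : ℕ) < m := Nat.succ_pos n
    set a : ℕ → (Fin N → Fin N) := fun p => if h : p < m then g ⟨p, h⟩ else g ⟨0, hg0⟩
    have hset : E g = {ω | ∀ p ∈ Finset.range m, A p ω = a p} := by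
      ext ω
      simp only [hE, Set.mem_setOf_eq, Finset.mem_range, a]
      constructor
      · intro h p hp
        rw [dif_pos hp]; exact h ⟨p, hp⟩
      · intro h p
        have := h p.1 p.2
        rwa [dif_pos p.2] at this
    rw [hset, hindep]
    simp only [hunif]
    rw [Finset.prod_const, Finset.card_range]
  have hsum : ∑ g : Fin m → (Fin N → Fin N), P (E g) = 1 := by
    simp only [hPE, Finset.sum_const, Finset.card_univ, Fintype.card_fun, Fintype.card_fin]
    rw [nsmul_eq_mul]
    push_cast
    rw [hq, ← mul_pow, ENNReal.mul_inv_cancel hNne hNnetop, one_pow]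
  set G : Finset (Fin m → (Fin N → Fin N)) := Fintype.piFinset (fun p : Fin m => D p.1) with hG
  have hU : {ω | ∀ p < m, A p ω ∈ D p} = ⋃ g ∈ G, E g := by
    ext ω
    simp only [Set.mem_setOf_eq, Set.mem_iUnion]
    constructor
    · intro h
      refine ⟨fun p : Fin m => A p ω, ?_, fun p => rfl⟩
      rw [hG, Fintype.mem_piFinset]
      exact fun p => h p.1 p.2
    · rintro ⟨g, hg, hω⟩ p hp
      rw [hG, Fintype.mem_piFinset] at hg
      rw [show A p ω = g ⟨p, hp⟩ from hω ⟨p, hp⟩]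
      exact hg ⟨p, hp⟩
  have hupper : P {ω | ∀ p < m, A p ω ∈ D p} ≤ ∑ g ∈ G, P (E g) := by
    rw [hU]; exact measure_biUnion_finset_le _ _
  have hsumsplit : ∑ g ∈ G, P (E g) + ∑ g ∈ Gᶜ, P (E g) = 1 := by
    rw [Finset.sum_add_sum_compl, hsum]
  have hcompl_ne_top : ∑ g ∈ Gᶜ, P (E g) ≠ ⊤ := by
    intro h
    rw [h, add_top] at hsumsplit
    exact (ENNReal.top_ne_one) hsumsplit
  have hlower : ∑ g ∈ G, P (E g) ≤ P {ω | ∀ p < m, A p ω ∈ D p} := by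
    have hcover : (Set.univ : Set Ω) ⊆
        {ω | ∀ p < m, A p ω ∈ D p} ∪ ⋃ g ∈ Gᶜ, E g := by
      intro ω _
      by_cases h : (fun p : Fin m => A p ω) ∈ G
      · left
        intro p hp
        rw [hG, Fintype.mem_piFinset] at h
        exact h ⟨p, hp⟩
      · right
        exact Set.mem_biUnion (Finset.mem_compl.mpr h) (fun p => rfl)
    have h1 : (1 : ENNReal) ≤ P {ω | ∀ p < m, A p ω ∈ D p} + ∑ g ∈ Gᶜ, P (E g) := by
      calc (1 : ENNReal) = P Set.univ := (measure_univ).symm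
        _ ≤ P ({ω | ∀ p < m, A p ω ∈ D p} ∪ ⋃ g ∈ Gᶜ, E g) := measure_mono hcover
        _ ≤ P {ω | ∀ p < m, A p ω ∈ D p} + P (⋃ g ∈ Gᶜ, E g) := measure_union_le _ _
        _ ≤ _ := by gcongr; exact measure_biUnion_finset_le _ _
    rw [← hsumsplit] at h1
    exact (ENNReal.add_le_add_iff_right hcompl_ne_top).mp h1
  rw [le_antisymm hupper hlower]
  simp only [hPE, Finset.sum_const, nsmul_eq_mul]
  congr 1
  rw [hG, Fintype.card_piFinset]
  push_cast
  rw [← Fin.prod_univ_eq_prod_range (fun p => ((D p).card : ENNReal)) m]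

/-- For every `n ≥ 0` and every weakly decreasing sequence `(c_0, …, c_n)` of maps (for each
`p < n` there is `b` with `c_{p+1} = b ∘ c_p`), with `c_p` non constant for `p < n` and `c_n`
constant, one has `P(T = n and (B_0, …, B_n) = (c_0, …, c_n)) = N^{−(N + |c| − 1)}`, where
`|c| = Σ_{p=0}^n |c_p({1,…,N})|` is the total number of image points of the sequence. -/
theorem excursion_probability
    (N : ℕ) (hN : 1 ≤ N)
    {Ω : Type*} [MeasurableSpace Ω] (P : Measure Ω) [IsProbabilityMeasure P]
    (A B : ℕ → Ω → (Fin N → Fin N))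
    (hunif : ∀ (p : ℕ) (a : Fin N → Fin N), P {ω | A p ω = a} = ((N : ENNReal) ^ N)⁻¹)
    (hindep : ∀ (s : Finset ℕ) (a : ℕ → (Fin N → Fin N)),
      P {ω | ∀ p ∈ s, A p ω = a p} = ∏ p ∈ s, P {ω | A p ω = a p})
    (hB0 : ∀ ω, B 0 ω = A 0 ω)
    (hBs : ∀ n ω, B (n + 1) ω = A (n + 1) ω ∘ B n ω)
    (n : ℕ) (c : ℕ → (Fin N → Fin N))
    (hdec : ∀ p < n, ∃ b : Fin N → Fin N, c (p + 1) = b ∘ c p)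
    (hnc : ∀ p < n, ¬ IsConstMap (c p))
    (hc : IsConstMap (c n)) :
    P {ω | (∀ m < n, ¬ IsConstMap (B m ω)) ∧ IsConstMap (B n ω) ∧ ∀ p ≤ n, B p ω = c p} =
      ((N : ENNReal) ^
          (N + (∑ p ∈ Finset.range (n + 1), (Finset.image (c p) Finset.univ).card) - 1))⁻¹ := by
  classical
  set k : ℕ → ℕ := fun p => (Finset.image (c p) Finset.univ).card with hk
  -- the sets of "admissible" values of A p
  set D : ℕ → Finset (Fin N → Fin N) := fun p =>
    Nat.casesOn p {c 0} (fun q => Finset.univ.filter fun a => a ∘ c q = c (q + 1)) with hD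
  have hD0 : D 0 = {c 0} := rfl
  have hDs : ∀ q, D (q + 1) = Finset.univ.filter (fun a => a ∘ c q = c (q + 1)) := fun q => rfl
  -- event rewriting
  have key : ∀ ω, (∀ p < n + 1, A p ω ∈ D p) → ∀ p ≤ n, B p ω = c p := by
    intro ω h p hp
    induction p with
    | zero =>
      have h0 := h 0 (Nat.succ_pos n)
      rw [hD0, Finset.mem_singleton] at h0
      rw [hB0, h0]
    | succ q ih =>
      have hq : B q ω = c q := ih (by omega)
      have h1 := h (q + 1) (by omega)
      rw [hDs, Finset.mem_filter] at h1
      rw [hBs, hq, h1.2]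
  have hevent : {ω | (∀ m < n, ¬ IsConstMap (B m ω)) ∧ IsConstMap (B n ω) ∧
      ∀ p ≤ n, B p ω = c p} = {ω | ∀ p < n + 1, A p ω ∈ D p} := by
    ext ω
    simp only [Set.mem_setOf_eq]
    constructor
    · rintro ⟨-, -, hBc⟩ p hp
      cases p with
      | zero =>
        rw [hD0, Finset.mem_singleton, ← hB0]
        exact hBc 0 (Nat.zero_le n)
      | succ q =>
        rw [hDs, Finset.mem_filter]
        refine ⟨Finset.mem_univ _, ?_⟩
        rw [← hBc q (by omega), ← hBs, hBc (q + 1) (by omega)]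
    · intro h
      have hB := key ω h
      refine ⟨fun m hm hconst => hnc m hm ?_, ?_, hB⟩
      · rwa [hB m (le_of_lt hm)] at hconst
      · rw [hB n le_rfl]; exact hc
  rw [hevent, prob_pi N P A hunif hindep n D]
  -- compute the cards
  have hkle : ∀ p, k p ≤ N := by
    intro p
    have := Finset.card_le_univ (Finset.image (c p) Finset.univ)
    simpa [hk] using this
  have hkn : k n = 1 := by
    obtain ⟨i, hi⟩ := hc
    have : Finset.image (c n) Finset.univ = {i} := by
      ext x
      simp only [Finset.mem_image, Finset.mem_univ, true_and, Finset.mem_singleton]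
      constructor
      · rintro ⟨j, rfl⟩; exact hi j
      · rintro rfl; exact ⟨⟨0, hN⟩, hi _⟩
    rw [hk]; simp [this]
  have hcardD : ∀ q < n, (D (q + 1)).card = N ^ (N - k q) := by
    intro q hq
    obtain ⟨b, hb⟩ := hdec q hq
    have hfilter : (Finset.univ.filter (fun a : Fin N → Fin N => a ∘ c q = c (q + 1)))
        = Finset.univ.filter
          (fun a : Fin N → Fin N => ∀ x ∈ Finset.image (c q) Finset.univ, a x = b x) := by
      apply Finset.filter_congr
      intro a _
      simp only [funext_iff, Function.comp_apply, Finset.mem_image, Finset.mem_univ, true_and,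
        eq_iff_iff]
      constructor
      · rintro h x ⟨i, rfl⟩
        rw [h i, hb]; rfl
      · intro h i
        rw [h (c q i) ⟨i, rfl⟩, hb]; rfl
    rw [hDs, hfilter, card_agree]
  -- the product of the cards
  have hprod : (∏ p ∈ Finset.range (n + 1), ((D p).card : ENNReal))
      = (N : ENNReal) ^ (∑ q ∈ Finset.range n, (N - k q)) := by
    rw [Finset.prod_range_succ']
    have h0 : ((D 0).card : ENNReal) = 1 := by rw [hD0]; simp
    rw [h0, mul_one]
    have hcast : ∀ q ∈ Finset.range n, ((D (q + 1)).card : ENNReal)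
        = (N : ENNReal) ^ (N - k q) := by
      intro q hq
      rw [hcardD q (Finset.mem_range.mp hq), Nat.cast_pow]
    rw [Finset.prod_congr rfl hcast, ← Finset.prod_pow_eq_pow_sum]
  rw [hprod]
  -- final exponent arithmetic
  have hNne : (N : ENNReal) ≠ 0 := by
    exact_mod_cast Nat.one_le_iff_ne_zero.mp hN
  have hNnetop : (N : ENNReal) ≠ ⊤ := ENNReal.natCast_ne_top N
  have harith : (∑ q ∈ Finset.range n, (N - k q)) +
      (N + (∑ p ∈ Finset.range (n + 1), k p) - 1) = N * n + N := by
    have h1 : (∑ q ∈ Finset.range n, (N - k q)) + (∑ q ∈ Finset.range n, k q) = N * n := by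
      rw [← Finset.sum_add_distrib]
      rw [Finset.sum_congr rfl (fun q _ => Nat.sub_add_cancel (hkle q))]
      rw [Finset.sum_const, Finset.card_range, smul_eq_mul, mul_comm]
    have h2 : (∑ p ∈ Finset.range (n + 1), k p) = (∑ q ∈ Finset.range n, k q) + 1 := by
      rw [Finset.sum_range_succ, hkn]
    omega
  rw [← ENNReal.inv_pow, ← pow_mul]
  rw [show N * (n + 1) = (∑ q ∈ Finset.range n, (N - k q)) +
      (N + (∑ p ∈ Finset.range (n + 1), k p) - 1) by rw [harith]; ring]
  rw [pow_add, ENNReal.mul_inv (Or.inl (pow_ne_zero _ hNne)) (Or.inl (ENNReal.pow_ne_top hNnetop)),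
    ← mul_assoc, ENNReal.mul_inv_cancel (pow_ne_zero _ hNne) (ENNReal.pow_ne_top hNnetop), one_mul]
end

section
/- Set K := e · ∏_{l≥1} (1 − 2/((l+1)(l+2)))^{−1}. Then for all integers N ≥ 1, 1 ≤ i ≤ N and n ≥ 1, P[S^{(N,i)} ≥ n] ≤ K · max(n/N, 1) · exp(−max(n/N − 1, 0)). -/
/-!
Write `w_k(p)` for the probability that the chain is at `p` at time `k` without having visited
`1`. Its mass is at most its excess `a_k = ∑ (p - 1) w_k(p)`, because only states `p ≥ 2` carry
weight. Row `q` of `M` is the law of the number of distinct values among `q` uniform draws from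
`N` values, so `∑ (p - 1) M_{q,p} = ∑_{j=1}^{q-1} (1 - 1/N)^j`; this is at most both
`(q - 1)(1 - 1/N)` and `(q - 1) - (q - 1)² / (3N)` for `q ≤ N`. Hence `a_{k+1} ≤ (1 - 1/N) a_k`
and, by Cauchy–Schwarz, `a_{k+1} ≤ a_k - a_k² / (3N)`. The second recursion gives
`a_k ≤ 3N / (k + 2)`, in particular `a_N < 3`, and the first then `a_{N+l} ≤ 3 e^{-l/N}`. The
product in `K` telescopes to `3`, so `K = 3e`, and `3 e^{-(n-1-N)/N} ≤ 3e · (n/N) · e^{1-n/N}`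
once `n > N`; for `n ≤ N` the bound exceeds `1`.
-/

open MeasureTheory Filter

/-- Stirling numbers of the second kind. -/
def stirling2 : ℕ → ℕ → ℕ
  | 0, 0 => 1
  | 0, _ + 1 => 0
  | _ + 1, 0 => 0
  | n + 1, k + 1 => (k + 1) * stirling2 n (k + 1) + stirling2 n k

/-- The transition matrix `M^{(N)}_{q,p} = S(q,p) · (N)_p / N^q`
(`S(q,p) = 0` for `p > q`, so the entries with `p > q` vanish automatically). -/
noncomputable def transMat (N q p : ℕ) : ENNReal :=
  ((stirling2 q p * Nat.descFactorial N p : ℕ) : ENNReal) / (N : ENNReal) ^ q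

/-- `R` is (a version of) the Markov chain with transition matrix `K` started at `i`:
its finite dimensional distributions are the required ones. -/
def IsMarkovChainWith {Ω : Type*} [MeasurableSpace Ω] (P : Measure Ω)
    (R : ℕ → Ω → ℕ) (i : ℕ) (K : ℕ → ℕ → ENNReal) : Prop :=
  ∀ (n : ℕ) (q : ℕ → ℕ),
    P {ω | ∀ m ≤ n, R m ω = q m} =
      (if q 0 = i then 1 else 0) * ∏ m ∈ Finset.range n, K (q m) (q (m + 1))

/-- First hitting time of the absorbing state `1`. -/
noncomputable def hitOne {Ω : Type*} (R : ℕ → Ω → ℕ) (ω : Ω) : ℕ :=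
  sInf {n | R n ω = 1}

/-- `K := e · ∏_{l ≥ 1} (1 − 2/((l+1)(l+2)))⁻¹` (product over `l ∈ ℕ*`, reindexed over `ℕ`). -/
noncomputable def Kconst : ℝ :=
  Real.exp 1 * ∏' l : ℕ, (1 - 2 / (((l : ℝ) + 2) * ((l : ℝ) + 3)))⁻¹

open Finset

theorem stirling2_eq_stirlingSecond : stirling2 = Nat.stirlingSecond := by
  ext n k
  induction n generalizing k with
  | zero => cases k <;> rfl
  | succ n ih =>
    cases k with
    | zero => rfl
    | succ k => simp only [stirling2, Nat.stirlingSecond_succ_succ, ih]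

theorem stirlingSecond_succ_succ_mul_descFactorial (N q p : ℕ) :
    ((q + 1).stirlingSecond (p + 1) * N.descFactorial (p + 1) : ℝ) =
      (p + 1) * (q.stirlingSecond (p + 1) * N.descFactorial (p + 1)) +
        (N - p) * (q.stirlingSecond p * N.descFactorial p) := by
  rw [Nat.stirlingSecond_succ_succ, Nat.descFactorial_succ]
  rcases le_or_gt p N with hp | hp
  · push_cast [Nat.cast_sub hp]
    ring
  · simp [Nat.descFactorial_eq_zero_iff_lt.2 hp]

theorem sum_mul_stirlingSecond_succ_mul_descFactorial (N q : ℕ) (G : ℕ → ℝ) :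
    ∑ p ∈ range (N + 1), G p * ((q + 1).stirlingSecond p * N.descFactorial p) =
      ∑ p ∈ range (N + 1),
        (p * G p + (N - p) * G (p + 1)) * (q.stirlingSecond p * N.descFactorial p) := by
  simp only [add_mul, sum_add_distrib]
  rw [sum_range_succ' _ N, sum_range_succ' (fun p => (p : ℝ) * G p * _) N,
    sum_range_succ (fun p => ((N : ℝ) - p) * G (p + 1) * _) N]
  simp only [stirlingSecond_succ_succ_mul_descFactorial, Nat.stirlingSecond_succ_zero, sub_self,
    Nat.cast_zero, Nat.cast_add, Nat.cast_one, zero_mul, mul_zero, add_zero, mul_add,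
    sum_add_distrib]
  congr 1 <;> refine sum_congr rfl fun p _ => by ring

theorem sum_stirlingSecond_mul_descFactorial (N q : ℕ) :
    ∑ p ∈ range (N + 1), (q.stirlingSecond p * N.descFactorial p : ℝ) = N ^ q := by
  induction q with
  | zero => simp [sum_range_succ']
  | succ q ih =>
    have h := sum_mul_stirlingSecond_succ_mul_descFactorial N q fun _ => 1
    simp only [one_mul, mul_one, add_sub_cancel] at h
    rw [h, ← mul_sum, ih, pow_succ, mul_comm]

theorem one_sub_pow_le {u : ℝ} (h0 : 0 ≤ u) (h1 : u ≤ 1) (j : ℕ) :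
    (1 - u) ^ j ≤ 1 - j * u + j * (j - 1) / 2 * u ^ 2 := by
  induction j with
  | zero => norm_num
  | succ j ih =>
    have hj : (0 : ℝ) ≤ j * (j - 1) := by
      rcases j with _ | j
      · simp
      · push_cast; nlinarith
    calc (1 - u) ^ (j + 1) ≤ (1 - j * u + j * (j - 1) / 2 * u ^ 2) * (1 - u) :=
          pow_succ (1 - u) j ▸ mul_le_mul_of_nonneg_right ih (by linarith)
      _ ≤ _ := by push_cast; nlinarith [mul_nonneg hj (pow_nonneg h0 3)]

theorem sum_range_one_sub_pow_succ_le {u : ℝ} {q : ℕ} (h0 : 0 ≤ u) (hq : (q + 1) * u ≤ 1) :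
    ∑ j ∈ range q, (1 - u) ^ (j + 1) ≤ q - q ^ 2 * u / 3 := by
  have hq0 : (0 : ℝ) ≤ q := Nat.cast_nonneg q
  have hu1 : u ≤ 1 := by nlinarith
  have hterm : ∀ j ∈ range q,
      (1 - u) ^ (j + 1) ≤ 1 - (j + 1) * u + (j + 1) * j / 2 * u ^ 2 := fun j _ => by
    simpa using one_sub_pow_le h0 hu1 (j + 1)
  have hsum : ∀ q : ℕ, ∑ j ∈ range q, (1 - ((j : ℝ) + 1) * u + (j + 1) * j / 2 * u ^ 2) =
      q - q * (q + 1) / 2 * u + (q + 1) * q * (q - 1) / 6 * u ^ 2 := fun q => by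
    induction q with
    | zero => simp
    | succ q ih => rw [sum_range_succ, ih]; push_cast; ring
  refine (sum_le_sum hterm).trans ?_
  rw [hsum]
  nlinarith [mul_nonneg (mul_nonneg hq0 h0) hq0, mul_nonneg hq0 h0,
    mul_le_mul_of_nonneg_left hq (mul_nonneg (mul_nonneg hq0 h0) hq0)]

theorem le_div_add_two_of_le_sub_sq_div {c : ℝ} {a : ℕ → ℝ} (hc : 0 < c)
    (h0 : a 0 ≤ c / 2) (hstep : ∀ k, a (k + 1) ≤ a k - a k ^ 2 / c) (k : ℕ) :
    a k ≤ c / (k + 2) := by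
  induction k with
  | zero => simpa using h0
  | succ k ih =>
    set b := c / (k + 2) with hb
    have hk : (0 : ℝ) < k + 2 := by positivity
    have hbc : b ≤ c / 2 :=
      div_le_div_of_nonneg_left hc.le two_pos (by linarith [k.cast_nonneg (α := ℝ)])
    -- `x ↦ x - x ^ 2 / c` is monotone on `[0, c / 2]`
    have hmono : a k - a k ^ 2 / c ≤ b - b ^ 2 / c := by
      have hfac : (b - b ^ 2 / c) - (a k - a k ^ 2 / c) = (b - a k) * (1 - (a k + b) / c) := by
        field_simp; ring
      have h1 : 0 ≤ 1 - (a k + b) / c := by rw [sub_nonneg, div_le_one hc]; linarith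
      nlinarith [mul_nonneg (sub_nonneg.2 ih) h1]
    have hnext : b - b ^ 2 / c ≤ c / ((k + 1 : ℕ) + 2) := by
      rw [hb, show c / (k + 2) - (c / (k + 2)) ^ 2 / c = c * (k + 1) / (k + 2) ^ 2 by
        field_simp; ring, div_le_div_iff₀ (by positivity) (by positivity)]
      push_cast
      nlinarith
    linarith [hstep k]

noncomputable def transMatReal (N q p : ℕ) : ℝ :=
  q.stirlingSecond p * N.descFactorial p / (N : ℝ) ^ q

section transMatReal
variable {N : ℕ}

theorem ofReal_transMatReal (hN : N ≠ 0) (q p : ℕ) :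
    ENNReal.ofReal (transMatReal N q p) = transMat N q p := by
  have hNq : (0 : ℝ) < (N : ℝ) ^ q := by positivity
  rw [transMatReal, transMat, stirling2_eq_stirlingSecond, ENNReal.ofReal_div_of_pos hNq,
    ← Nat.cast_mul, ← Nat.cast_pow, ENNReal.ofReal_natCast, ENNReal.ofReal_natCast, Nat.cast_pow]

theorem transMatReal_nonneg (N q p : ℕ) : 0 ≤ transMatReal N q p := by
  unfold transMatReal; positivity

theorem transMatReal_eq_zero_of_lt {q p : ℕ} (h : q < p) : transMatReal N q p = 0 := by
  simp [transMatReal, Nat.stirlingSecond_eq_zero_of_lt h]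

theorem transMatReal_zero_right {q : ℕ} (hq : q ≠ 0) : transMatReal N q 0 = 0 := by
  obtain ⟨q, rfl⟩ := Nat.exists_eq_succ_of_ne_zero hq
  simp [transMatReal]

theorem sum_mul_transMatReal (N q : ℕ) (f : ℕ → ℝ) :
    ∑ p ∈ range (N + 1), f p * transMatReal N q p =
      (∑ p ∈ range (N + 1), f p * (q.stirlingSecond p * N.descFactorial p)) / (N : ℝ) ^ q := by
  simp only [transMatReal, mul_div_assoc', sum_div]

theorem sum_transMatReal (hN : N ≠ 0) (q : ℕ) : ∑ p ∈ range (N + 1), transMatReal N q p = 1 := by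
  have h := sum_mul_transMatReal N q fun _ => 1
  simp only [one_mul] at h
  rw [h, sum_stirlingSecond_mul_descFactorial, div_self (by positivity)]

theorem sum_sub_one_mul_transMatReal_succ (hN : N ≠ 0) (q : ℕ) :
    ∑ p ∈ range (N + 1), ((p : ℝ) - 1) * transMatReal N (q + 1) p =
      (1 - (N : ℝ)⁻¹) * (∑ p ∈ range (N + 1), ((p : ℝ) - 1) * transMatReal N q p + 1) := by
  have hN' : (N : ℝ) ≠ 0 := by exact_mod_cast hN
  have hstep := sum_mul_stirlingSecond_succ_mul_descFactorial N q fun p => (p : ℝ) - 1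
  have hrow := sum_stirlingSecond_mul_descFactorial N q
  rw [sum_mul_transMatReal, sum_mul_transMatReal, hstep]
  have hcoef : ∀ p ∈ range (N + 1), ((p : ℝ) * (p - 1) + (N - p) * ((p + 1 : ℕ) - 1)) *
      (q.stirlingSecond p * N.descFactorial p) =
      (N - 1) * (((p : ℝ) - 1) * (q.stirlingSecond p * N.descFactorial p)) +
        (N - 1) * (q.stirlingSecond p * N.descFactorial p) := fun p _ => by push_cast; ring
  rw [sum_congr rfl hcoef, sum_add_distrib, ← mul_sum, ← mul_sum, hrow]
  field_simp
  ring

theorem sum_sub_one_mul_transMatReal_succ_eq (hN : N ≠ 0) (q : ℕ) :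
    ∑ p ∈ range (N + 1), ((p : ℝ) - 1) * transMatReal N (q + 1) p =
      ∑ j ∈ range q, (1 - (N : ℝ)⁻¹) ^ (j + 1) := by
  induction q with
  | zero =>
    refine sum_eq_zero fun p _ => ?_
    rw [zero_add]
    rcases lt_trichotomy p 1 with hp | rfl | hp
    · rw [Nat.lt_one_iff.1 hp, transMatReal_zero_right one_ne_zero, mul_zero]
    · simp
    · rw [transMatReal_eq_zero_of_lt hp, mul_zero]
  | succ q ih =>
    rw [sum_sub_one_mul_transMatReal_succ hN, ih, sum_range_succ', pow_one, mul_add, mul_sum,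
      mul_one]
    simp only [pow_succ']

theorem sum_sub_one_mul_transMatReal_le_mul (hN : N ≠ 0) (q : ℕ) :
    ∑ p ∈ range (N + 1), ((p : ℝ) - 1) * transMatReal N (q + 1) p ≤ q * (1 - (N : ℝ)⁻¹) := by
  have h0 : 0 ≤ 1 - (N : ℝ)⁻¹ := sub_nonneg.2 (Nat.cast_inv_le_one N)
  have h1 : 1 - (N : ℝ)⁻¹ ≤ 1 := by simp
  rw [sum_sub_one_mul_transMatReal_succ_eq hN]
  calc ∑ j ∈ range q, (1 - (N : ℝ)⁻¹) ^ (j + 1) ≤ ∑ j ∈ range q, (1 - (N : ℝ)⁻¹) :=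
        sum_le_sum fun j _ => pow_le_of_le_one h0 h1 j.succ_ne_zero
    _ = q * (1 - (N : ℝ)⁻¹) := by simp [mul_sub]

theorem sum_sub_one_mul_transMatReal_le_sub (hN : N ≠ 0) {q : ℕ} (hq : q + 1 ≤ N) :
    ∑ p ∈ range (N + 1), ((p : ℝ) - 1) * transMatReal N (q + 1) p ≤ q - q ^ 2 / (3 * N) := by
  rw [sum_sub_one_mul_transMatReal_succ_eq hN]
  have hqN : ((q : ℝ) + 1) * (N : ℝ)⁻¹ ≤ 1 := by
    rw [← div_eq_mul_inv, div_le_one (by positivity)]; exact_mod_cast hq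
  convert sum_range_one_sub_pow_succ_le (by positivity) hqN using 1
  field_simp

end transMatReal

namespace StirlingChain

open Function

noncomputable def step (N : ℕ) (v : ℕ → ℝ) (p : ℕ) : ℝ :=
  if p = 1 then 0 else ∑ j ∈ range (N + 1), v j * transMatReal N j p

def mass (N : ℕ) (v : ℕ → ℝ) : ℝ := ∑ p ∈ range (N + 1), v p

def excess (N : ℕ) (v : ℕ → ℝ) : ℝ := ∑ p ∈ range (N + 1), ((p : ℝ) - 1) * v p

structure IsSubprob (N : ℕ) (v : ℕ → ℝ) : Prop where
  nonneg : 0 ≤ v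
  support_subset : support v ⊆ Set.Icc 2 N
  mass_le_one : mass N v ≤ 1

variable {N : ℕ} {v : ℕ → ℝ}

theorem step_nonneg (hv : 0 ≤ v) : 0 ≤ step N v := fun p => by
  unfold step
  split_ifs
  · exact le_rfl
  · exact sum_nonneg fun j _ => mul_nonneg (hv j) (transMatReal_nonneg N j p)

theorem support_step_subset (hv : support v ⊆ Set.Icc 2 N) : support (step N v) ⊆ Set.Icc 2 N := by
  intro p hp
  rw [mem_support, step] at hp
  split_ifs at hp with hp1
  · exact absurd rfl hp
  obtain ⟨j, -, hj⟩ := exists_ne_zero_of_sum_ne_zero hp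
  obtain ⟨hj2, hjN⟩ := hv (left_ne_zero_of_mul hj)
  have hM := right_ne_zero_of_mul hj
  have hpj : p ≤ j := not_lt.1 fun h => hM (transMatReal_eq_zero_of_lt h)
  have hp0 : p ≠ 0 := by rintro rfl; exact hM (transMatReal_zero_right (by omega))
  exact ⟨by omega, hpj.trans hjN⟩

theorem mass_step_le (hN : N ≠ 0) (hv : 0 ≤ v) : mass N (step N v) ≤ mass N v :=
  calc mass N (step N v)
      ≤ ∑ p ∈ range (N + 1), ∑ j ∈ range (N + 1), v j * transMatReal N j p := by
        refine sum_le_sum fun p _ => ?_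
        unfold step
        split_ifs
        · exact sum_nonneg fun j _ => mul_nonneg (hv j) (transMatReal_nonneg N j p)
        · exact le_rfl
    _ = mass N v := by
        rw [sum_comm]
        simp only [← mul_sum, sum_transMatReal hN, mul_one, mass]

theorem IsSubprob.map_step (hN : N ≠ 0) (h : IsSubprob N v) : IsSubprob N (step N v) :=
  ⟨step_nonneg h.nonneg, support_step_subset h.support_subset,
    (mass_step_le hN h.nonneg).trans h.mass_le_one⟩

theorem IsSubprob.iterate_step (hN : N ≠ 0) (h : IsSubprob N v) (k : ℕ) :
    IsSubprob N ((step N)^[k] v) := by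
  induction k with
  | zero => exact h
  | succ k ih => rw [iterate_succ_apply']; exact ih.map_step hN

theorem IsSubprob.mass_le_excess (h : IsSubprob N v) : mass N v ≤ excess N v :=
  sum_le_sum fun p _ => by
    by_cases hp : v p = 0
    · simp [hp]
    · have : (2 : ℝ) ≤ p := by exact_mod_cast (h.support_subset hp).1
      nlinarith [mul_nonneg (sub_nonneg.2 this) (h.nonneg p)]

theorem IsSubprob.excess_le (h : IsSubprob N v) : excess N v ≤ N :=
  calc excess N v ≤ ∑ p ∈ range (N + 1), (N : ℝ) * v p := by
        refine sum_le_sum fun p hp => mul_le_mul_of_nonneg_right ?_ (h.nonneg p)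
        have : (p : ℝ) ≤ N := by exact_mod_cast Nat.lt_succ_iff.1 (mem_range.1 hp)
        linarith
    _ ≤ N := by
        rw [← mul_sum]
        exact mul_le_of_le_one_right (Nat.cast_nonneg N) h.mass_le_one

theorem excess_step (N : ℕ) (v : ℕ → ℝ) :
    excess N (step N v) =
      ∑ j ∈ range (N + 1), v j * ∑ p ∈ range (N + 1), ((p : ℝ) - 1) * transMatReal N j p := by
  have hkill : ∀ p ∈ range (N + 1), ((p : ℝ) - 1) * step N v p =
      ∑ j ∈ range (N + 1), v j * (((p : ℝ) - 1) * transMatReal N j p) := fun p _ => by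
    unfold step
    split_ifs with hp
    · simp [hp]
    · rw [mul_sum]; exact sum_congr rfl fun j _ => by ring
  rw [excess, sum_congr rfl hkill, sum_comm]
  simp only [mul_sum]

theorem IsSubprob.excess_step_le (h : IsSubprob N v) {f : ℝ → ℝ}
    (hf : ∀ q : ℕ, q + 1 ≤ N →
      ∑ p ∈ range (N + 1), ((p : ℝ) - 1) * transMatReal N (q + 1) p ≤ f q) :
    excess N (step N v) ≤ ∑ j ∈ range (N + 1), v j * f ((j : ℝ) - 1) := by
  rw [excess_step]
  refine sum_le_sum fun j _ => ?_
  by_cases hj : v j = 0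
  · simp [hj]
  obtain ⟨hj2, hjN⟩ := h.support_subset hj
  obtain ⟨q, rfl⟩ : ∃ q, j = q + 1 := ⟨j - 1, by omega⟩
  rw [Nat.cast_succ, add_sub_cancel_right]
  exact mul_le_mul_of_nonneg_left (hf q hjN) (h.nonneg _)

theorem IsSubprob.excess_step_le_mul (hN : N ≠ 0) (h : IsSubprob N v) :
    excess N (step N v) ≤ (1 - (N : ℝ)⁻¹) * excess N v := by
  refine (h.excess_step_le (f := fun x => x * (1 - (N : ℝ)⁻¹))
    fun q _ => sum_sub_one_mul_transMatReal_le_mul hN q).trans_eq ?_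
  rw [excess, mul_sum]
  exact sum_congr rfl fun j _ => by ring

theorem IsSubprob.sq_excess_le (h : IsSubprob N v) :
    excess N v ^ 2 ≤ ∑ p ∈ range (N + 1), ((p : ℝ) - 1) ^ 2 * v p :=
  calc excess N v ^ 2 ≤ mass N v * ∑ p ∈ range (N + 1), ((p : ℝ) - 1) ^ 2 * v p :=
        sum_sq_le_sum_mul_sum_of_sq_le_mul _ (fun p _ => h.nonneg p)
          (fun p _ => mul_nonneg (sq_nonneg _) (h.nonneg p)) fun p _ => le_of_eq (by ring)
    _ ≤ _ := mul_le_of_le_one_left (sum_nonneg fun p _ => mul_nonneg (sq_nonneg _) (h.nonneg p))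
        h.mass_le_one

theorem IsSubprob.excess_step_le_sub_sq (hN : N ≠ 0) (h : IsSubprob N v) :
    excess N (step N v) ≤ excess N v - excess N v ^ 2 / (3 * N) :=
  calc excess N (step N v)
      ≤ ∑ j ∈ range (N + 1), v j * (((j : ℝ) - 1) - ((j : ℝ) - 1) ^ 2 / (3 * N)) :=
        h.excess_step_le (f := fun x => x - x ^ 2 / (3 * N))
          fun q hq => sum_sub_one_mul_transMatReal_le_sub hN hq
    _ = excess N v - (∑ p ∈ range (N + 1), ((p : ℝ) - 1) ^ 2 * v p) / (3 * N) := by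
        rw [excess, sum_div, ← sum_sub_distrib]
        exact sum_congr rfl fun j _ => by ring
    _ ≤ excess N v - excess N v ^ 2 / (3 * N) := by
        gcongr
        exact h.sq_excess_le

theorem IsSubprob.excess_nonneg (h : IsSubprob N v) : 0 ≤ excess N v :=
  (sum_nonneg fun p _ => h.nonneg p).trans h.mass_le_excess

theorem IsSubprob.excess_iterate_le_div (hN : N ≠ 0) (h : IsSubprob N v) (k : ℕ) :
    excess N ((step N)^[k] v) ≤ 3 * N / (k + 2) :=
  le_div_add_two_of_le_sub_sq_div (a := fun k => excess N ((step N)^[k] v)) (by positivity)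
    (h.excess_le.trans (by linarith [(Nat.cast_nonneg N : (0 : ℝ) ≤ N)]))
    (fun k => by
      simp only [iterate_succ_apply']
      exact (h.iterate_step hN k).excess_step_le_sub_sq hN) k

theorem IsSubprob.excess_iterate_le_pow (hN : N ≠ 0) (h : IsSubprob N v) (l : ℕ) :
    excess N ((step N)^[l] v) ≤ (1 - (N : ℝ)⁻¹) ^ l * excess N v := by
  induction l with
  | zero => simp
  | succ l ih =>
    rw [iterate_succ_apply', pow_succ', mul_assoc]
    refine ((h.iterate_step hN l).excess_step_le_mul hN).trans (mul_le_mul_of_nonneg_left ih ?_)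
    exact sub_nonneg.2 (Nat.cast_inv_le_one N)

theorem IsSubprob.mass_iterate_le_exp (hN : N ≠ 0) (h : IsSubprob N v) (l : ℕ) :
    mass N ((step N)^[l + N] v) ≤ 3 * Real.exp (-(l / N)) := by
  have hN' : (0 : ℝ) < N := by positivity
  have hpow : (1 - (N : ℝ)⁻¹) ^ l ≤ Real.exp (-(l / N)) := by
    rw [div_eq_mul_inv, neg_mul_eq_mul_neg, Real.exp_nat_mul]
    refine pow_le_pow_left₀ ?_ ?_ l
    · exact sub_nonneg.2 (Nat.cast_inv_le_one N)
    · linarith [Real.add_one_le_exp (-(N : ℝ)⁻¹)]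
  have hN3 : excess N ((step N)^[N] v) ≤ 3 := (h.excess_iterate_le_div hN N).trans <| by
    rw [div_le_iff₀ (by positivity)]; linarith
  calc mass N ((step N)^[l + N] v) ≤ excess N ((step N)^[l] ((step N)^[N] v)) := by
        rw [← iterate_add_apply]; exact (h.iterate_step hN _).mass_le_excess
    _ ≤ (1 - (N : ℝ)⁻¹) ^ l * excess N ((step N)^[N] v) :=
        (h.iterate_step hN N).excess_iterate_le_pow hN l
    _ ≤ Real.exp (-(l / N)) * 3 :=
        mul_le_mul hpow hN3 (h.iterate_step hN N).excess_nonneg (Real.exp_nonneg _)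
    _ = 3 * Real.exp (-(l / N)) := mul_comm _ _

end StirlingChain

theorem inv_one_sub_two_div_mul (x : ℝ) (hx : 0 ≤ x) :
    (1 - 2 / ((x + 2) * (x + 3)))⁻¹ = 1 + 2 / ((x + 1) * (x + 4)) := by
  have h1 : (x + 1) * (x + 4) ≠ 0 := by positivity
  have h2 : (x + 2) * (x + 3) - 2 = (x + 1) * (x + 4) := by ring
  field_simp
  rw [h2]
  field_simp
  ring

theorem prod_range_inv_one_sub_two_div (L : ℕ) :
    ∏ l ∈ range L, (1 - 2 / (((l : ℝ) + 2) * ((l : ℝ) + 3)))⁻¹ = 3 * (L + 1) / (L + 3) := by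
  induction L with
  | zero => norm_num
  | succ L ih =>
    rw [prod_range_succ, ih, inv_one_sub_two_div_mul _ L.cast_nonneg]
    push_cast
    field_simp
    ring

theorem tprod_inv_one_sub_two_div :
    ∏' l : ℕ, (1 - 2 / (((l : ℝ) + 2) * ((l : ℝ) + 3)))⁻¹ = 3 := by
  have hsum : Summable fun l : ℕ => 2 / (((l : ℝ) + 1) * ((l : ℝ) + 4)) := by
    refine .of_nonneg_of_le (fun l => by positivity) (fun l => ?_)
      (((summable_nat_add_iff 1).2 (Real.summable_nat_pow_inv.2 one_lt_two)).mul_left 2)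
    push_cast
    rw [← div_eq_mul_inv]
    exact div_le_div_of_nonneg_left zero_le_two (by positivity) (by nlinarith)
  have hmul := Real.multipliable_one_add_of_summable hsum
  simp only [← inv_one_sub_two_div_mul _ (Nat.cast_nonneg _)] at hmul
  refine (hmul.hasProd_iff_tendsto_nat.2 ?_).tprod_eq
  simp only [prod_range_inv_one_sub_two_div]
  have h := ((tendsto_add_atTop_iff_nat 1).2 (tendsto_natCast_div_add_atTop (2 : ℝ))).const_mul 3
  refine (h.congr fun L => ?_).trans (by rw [mul_one])
  push_cast
  ring

theorem Kconst_eq : Kconst = 3 * Real.exp 1 := by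
  rw [Kconst, tprod_inv_one_sub_two_div, mul_comm]

section KilledChain

open scoped ENNReal

variable (K : ℕ → ℕ → ℝ≥0∞) (A : Set ℕ)

noncomputable def pathMass (v : ℕ → ℝ≥0∞) (k : ℕ) : ℝ≥0∞ :=
  ∑' c : Fin (k + 1) → A, v (c 0) * ∏ m : Fin k, K (c m.castSucc) (c m.succ)

noncomputable def killedStep (v : ℕ → ℝ≥0∞) (p : ℕ) : ℝ≥0∞ :=
  ∑' j : A, v j * K j p

variable {K A}

theorem pathMass_congr {v v' : ℕ → ℝ≥0∞} (h : ∀ p ∈ A, v p = v' p) (k : ℕ) :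
    pathMass K A v k = pathMass K A v' k :=
  tsum_congr fun c => by rw [h _ (c 0).2]

theorem pathMass_zero (v : ℕ → ℝ≥0∞) : pathMass K A v 0 = ∑' p : A, v p := by
  rw [pathMass, ← (Equiv.funUnique (Fin 1) A).symm.tsum_eq]
  simp

theorem pathMass_succ (v : ℕ → ℝ≥0∞) (k : ℕ) :
    pathMass K A v (k + 1) = pathMass K A (killedStep K A v) k := by
  rw [pathMass, ← (Fin.consEquiv fun _ => A).tsum_eq, ENNReal.tsum_prod', ENNReal.tsum_comm]
  refine tsum_congr fun c => ?_
  simp only [Fin.consEquiv_apply, Fin.cons_zero, Fin.prod_univ_succ, Fin.castSucc_zero,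
    Fin.cons_succ, ← Fin.succ_castSucc, killedStep, ← ENNReal.tsum_mul_right, mul_assoc]

theorem measure_forall_mem_le_pathMass {Ω : Type*} [MeasurableSpace Ω] {P : Measure Ω}
    {R : ℕ → Ω → ℕ} {i : ℕ} (hR : IsMarkovChainWith P R i K) (k : ℕ) :
    P {ω | ∀ m ≤ k, R m ω ∈ A} ≤ pathMass K A (fun p => if p = i then 1 else 0) k := by
  let seq : (Fin (k + 1) → A) → ℕ → ℕ := fun c m => if h : m < k + 1 then c ⟨m, h⟩ else 0
  have hcover : {ω | ∀ m ≤ k, R m ω ∈ A} ⊆ ⋃ c, {ω | ∀ m ≤ k, R m ω = seq c m} := by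
    intro ω hω
    refine Set.mem_iUnion.2 ⟨fun m => ⟨R m ω, hω m (Nat.lt_succ_iff.1 m.2)⟩, fun m hm => ?_⟩
    simp only [seq, dif_pos (Nat.lt_succ_iff.2 hm)]
  refine (measure_mono hcover).trans <|
    (measure_iUnion_le _).trans (ENNReal.tsum_le_tsum fun c => ?_)
  rw [hR k (seq c), ← Fin.prod_univ_eq_prod_range]
  have hseq : ∀ m : Fin (k + 1), seq c m = c m := fun m => dif_pos m.2
  refine le_of_eq ?_
  rw [← Fin.val_zero (k + 1), hseq]
  congr 1
  refine Finset.prod_congr rfl fun m _ => ?_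
  exact congrArg₂ K (hseq m.castSucc) (hseq m.succ)

end KilledChain

namespace StirlingChain

open Function

variable {N : ℕ} {w : ℕ → ℝ}

theorem tsum_ofReal_eq_sum {f : ℕ → ℝ} (hf0 : 0 ≤ f) (hf : support f ⊆ Set.Icc 2 N) :
    ∑' j : {p | p ≠ 1}, ENNReal.ofReal (f j) = ENNReal.ofReal (∑ j ∈ range (N + 1), f j) := by
  have hsupp : support (fun j => ENNReal.ofReal (f j)) ⊆ Set.Icc 2 N := fun j hj =>
    hf fun h => hj (by simp [h])
  rw [tsum_subtype_eq_of_support_subset (s := {p | p ≠ 1})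
      (hsupp.trans fun j hj => (one_lt_two.trans_le hj.1).ne'),
    tsum_eq_sum' (s := range (N + 1))
      (hsupp.trans fun j hj => mem_range.2 (Nat.lt_succ_of_le hj.2)),
    ENNReal.ofReal_sum_of_nonneg fun j _ => hf0 j]

theorem killedStep_ofReal (hN : N ≠ 0) (hw : IsSubprob N w) {p : ℕ} (hp : p ≠ 1) :
    killedStep (transMat N) {p | p ≠ 1} (fun j => ENNReal.ofReal (w j)) p =
      ENNReal.ofReal (step N w p) := by
  have hterm : ∀ j, ENNReal.ofReal (w j) * transMat N j p =
      ENNReal.ofReal (w j * transMatReal N j p) := fun j => by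
    rw [ENNReal.ofReal_mul (hw.nonneg j), ofReal_transMatReal hN]
  simp only [killedStep, hterm, step, if_neg hp]
  refine tsum_ofReal_eq_sum (fun j => mul_nonneg (hw.nonneg j) (transMatReal_nonneg N j p)) ?_
  exact (support_mul_subset_left _ _).trans hw.support_subset

theorem pathMass_ofReal (hN : N ≠ 0) (hw : IsSubprob N w) (k : ℕ) :
    pathMass (transMat N) {p | p ≠ 1} (fun p => ENNReal.ofReal (w p)) k =
      ENNReal.ofReal (mass N ((step N)^[k] w)) := by
  induction k generalizing w with
  | zero => exact (pathMass_zero _).trans (tsum_ofReal_eq_sum hw.nonneg hw.support_subset)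
  | succ k ih =>
    rw [pathMass_succ,
      pathMass_congr (A := {p | p ≠ 1}) (v' := fun p => ENNReal.ofReal (step N w p))
        (fun p hp => killedStep_ofReal hN hw hp),
      ih (hw.map_step hN), iterate_succ_apply]

theorem IsSubprob.mass_iterate_le (hN : N ≠ 0) (h : IsSubprob N w) (n : ℕ) :
    mass N ((step N)^[n - 1] w) ≤
      Kconst * max ((n : ℝ) / N) 1 * Real.exp (-(max ((n : ℝ) / N - 1) 0)) := by
  have hN' : (0 : ℝ) < N := by positivity
  rw [Kconst_eq]
  rcases le_or_gt n N with hnN | hNn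
  · have hx : (n : ℝ) / N ≤ 1 := div_le_one_of_le₀ (by exact_mod_cast hnN) hN'.le
    rw [max_eq_right hx, max_eq_right (by linarith), neg_zero, Real.exp_zero, mul_one, mul_one]
    calc mass N ((step N)^[n - 1] w) ≤ 1 := (h.iterate_step hN _).mass_le_one
      _ ≤ 3 * Real.exp 1 := by linarith [Real.add_one_le_exp 1]
  · obtain ⟨l, rfl⟩ : ∃ l, n = l + N + 1 := ⟨n - N - 1, by omega⟩
    set x : ℝ := ((l + N + 1 : ℕ) : ℝ) / N with hx
    have hx1 : 1 ≤ x := by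
      rw [hx, le_div_iff₀ hN', one_mul]; exact_mod_cast (by omega : N ≤ l + N + 1)
    have hl : -((l : ℝ) / N) ≤ 2 - x := by
      have hx' : x = l / N + 1 + (N : ℝ)⁻¹ := by rw [hx]; push_cast; field_simp
      linarith [Nat.cast_inv_le_one (α := ℝ) N]
    rw [max_eq_left hx1, max_eq_left (by linarith), Nat.add_sub_cancel]
    calc mass N ((step N)^[l + N] w) ≤ 3 * Real.exp (-((l : ℝ) / N)) := h.mass_iterate_le_exp hN l
      _ ≤ 3 * x * Real.exp (2 - x) := by
        rw [mul_assoc]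
        gcongr
        exact le_mul_of_one_le_left (Real.exp_nonneg _) hx1 |>.trans' (Real.exp_le_exp.2 hl)
      _ = 3 * Real.exp 1 * x * Real.exp (-(x - 1)) := by
        rw [show 2 - x = 1 + -(x - 1) by ring, Real.exp_add]; ring

theorem isSubprob_indicator_ne_one {i : ℕ} (hi1 : 1 ≤ i) (hiN : i ≤ N) :
    IsSubprob N ({p | p ≠ 1}.indicator fun p => if p = i then 1 else 0) where
  nonneg := Set.indicator_nonneg fun p _ => by positivity
  support_subset p hp := by
    obtain ⟨hp1, hpi⟩ : p ≠ 1 ∧ p = i := by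
      by_contra h
      exact hp (by simp_all)
    exact ⟨by omega, by omega⟩
  mass_le_one := by
    refine (sum_le_sum fun p _ => Set.indicator_le_self' (fun _ _ => ?_) p).trans ?_
    · positivity
    · rw [sum_ite_eq' (range (N + 1)) i]
      split_ifs <;> norm_num

end StirlingChain

theorem hitting_time_tail_bound_general
    (N i : ℕ) (hi1 : 1 ≤ i) (hiN : i ≤ N)
    {Ω : Type*} [MeasurableSpace Ω] (P : Measure Ω)
    (R : ℕ → Ω → ℕ) (hR : IsMarkovChainWith P R i (transMat N))
    (n : ℕ) (hn : 1 ≤ n) :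
    P {ω | ∀ m < n, R m ω ≠ 1} ≤
      ENNReal.ofReal
        (Kconst * max ((n : ℝ) / (N : ℝ)) 1 *
          Real.exp (-(max ((n : ℝ) / (N : ℝ) - 1) 0))) := by
  open StirlingChain in
  set A : Set ℕ := {p | p ≠ 1}
  set w : ℕ → ℝ := A.indicator fun p => if p = i then 1 else 0
  have hN : N ≠ 0 := by omega
  have hw : IsSubprob N w := isSubprob_indicator_ne_one hi1 hiN
  calc P {ω | ∀ m < n, R m ω ≠ 1} = P {ω | ∀ m ≤ n - 1, R m ω ∈ A} := by
        congr 1; ext ω; exact ⟨fun h m hm => h m (by omega), fun h m hm => h m (by omega)⟩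
    _ ≤ pathMass (transMat N) A (fun p => if p = i then 1 else 0) (n - 1) :=
        measure_forall_mem_le_pathMass hR (n - 1)
    _ = pathMass (transMat N) A (fun p => ENNReal.ofReal (w p)) (n - 1) :=
        pathMass_congr (fun p hp => by simp [w, Set.indicator_of_mem hp, apply_ite]) _
    _ = ENNReal.ofReal (mass N ((step N)^[n - 1] w)) := pathMass_ofReal hN hw _
    _ ≤ _ := ENNReal.ofReal_le_ofReal (hw.mass_iterate_le hN n)

/-- For all `N ≥ 1`, `1 ≤ i ≤ N` and `n ≥ 1`,
`P[S^{(N,i)} ≥ n] ≤ K · max(n/N, 1) · exp(−max(n/N − 1, 0))`. -/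
theorem hitting_time_tail_bound
    (N i : ℕ) (hi1 : 1 ≤ i) (hiN : i ≤ N)
    {Ω : Type*} [MeasurableSpace Ω] (P : Measure Ω) [IsProbabilityMeasure P]
    (R : ℕ → Ω → ℕ) (hR : IsMarkovChainWith P R i (transMat N))
    (n : ℕ) (hn : 1 ≤ n) :
    P {ω | ∀ m < n, R m ω ≠ 1} ≤
      ENNReal.ofReal
        (Kconst * max ((n : ℝ) / (N : ℝ)) 1 *
          Real.exp (-(max ((n : ℝ) / (N : ℝ) - 1) 0))) :=
  hitting_time_tail_bound_general N i hi1 hiN P R hR n hn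
end

section
/- For an integer N ≥ 2 define g_N(s) = s − N + N(1 − 1/N)^s for real s ≥ 0. Then: (i) there exists a constant χ > 0 (independent of N) such that for every N ≥ 2 and every real s with 1 ≤ s ≤ N, g_N(s) ≥ (s−1)²/(χN); (ii) for every N ≥ 2 and every real s ≥ 0, g_N(s) ≤ s²/(2N). In particular g_N is nonnegative and increasing on [1, ∞). -/
/-!
Write `ℓ = log (1 - 1/N)`. Then `-1/(N-1) < ℓ ≤ -1/N` and `N e^ℓ = N - 1`, so
`g_N(s) = (s - 1) - (N - 1)(1 - e^{(s-1)ℓ})`.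
The upper bound is `e^{sℓ} ≤ e^{-s/N} ≤ 1 - s/N + s²/(2N²)`. Since `exp` is 1-Lipschitz on
`(-∞, 0]`, the slope of `g_N` on `[1, ∞)` is at least `1 + (N - 1)ℓ > 0`. For the lower bound,
`e^{-y} ≥ (1 - y/2)²` for `y ≤ 2` gives `g_N(s) ≥ (N - 1)((s - 1)ℓ)²/4 ≥ (s - 1)²/(8N)`.
-/

/-- For an integer `N ≥ 2` and real `s ≥ 0`, `g_N(s) = s − N + N(1 − 1/N)^s`,
where `(1 − 1/N)^s = exp (s log (1 − 1/N))`. -/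
noncomputable def gFun (N : ℕ) (s : ℝ) : ℝ :=
  s - N + N * Real.exp (s * Real.log (1 - 1 / (N : ℝ)))

open Real Set

lemma one_sub_one_div_pos {c : ℝ} (hc : 1 < c) : 0 < 1 - 1 / c :=
  sub_pos.2 ((div_lt_one (by linarith)).2 hc)

namespace Real

lemma exp_neg_le_one_sub_add_sq_div_two {x : ℝ} (hx : 0 ≤ x) :
    exp (-x) ≤ 1 - x + x ^ 2 / 2 := by
  have hexp := quadratic_le_exp_of_nonneg hx
  have hprod : exp (-x) * exp x = 1 := by rw [← exp_add, neg_add_cancel, exp_zero]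
  -- `(1 + x + x²/2)(1 - x + x²/2) = 1 + x⁴/4 ≥ 1`
  nlinarith [exp_pos (-x), pow_nonneg hx 4]

lemma one_sub_add_sq_div_four_le_exp_neg {y : ℝ} (hy : y ≤ 2) :
    1 - y + y ^ 2 / 4 ≤ exp (-y) :=
  calc 1 - y + y ^ 2 / 4 = (1 - y / 2) ^ 2 := by ring
    _ ≤ exp (-(y / 2)) ^ 2 := by
      gcongr
      · linarith
      · exact one_sub_le_exp_neg _
    _ = exp (-y) := by rw [← exp_nat_mul]; ring_nf

lemma log_one_sub_one_div_le {c : ℝ} (hc : 1 < c) : log (1 - 1 / c) ≤ -(1 / c) := by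
  have := log_le_sub_one_of_pos (one_sub_one_div_pos hc)
  linarith

lemma neg_one_lt_sub_one_mul_log_one_sub_one_div {c : ℝ} (hc : 1 < c) :
    -1 < (c - 1) * log (1 - 1 / c) := by
  have hc1 : 0 < c - 1 := sub_pos.2 hc
  have hq : 1 - 1 / c = (c - 1) / c := by field_simp
  have h := log_lt_sub_one_of_pos (x := c / (c - 1)) (by positivity)
    (by rw [ne_eq, div_eq_one_iff_eq hc1.ne']; linarith)
  rw [hq, ← inv_div, log_inv]
  have : (c - 1) * (c / (c - 1) - 1) = 1 := by field_simp; ring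
  nlinarith

lemma mul_exp_log_one_sub_one_div {c : ℝ} (hc : 1 < c) :
    c * exp (log (1 - 1 / c)) = c - 1 := by
  rw [exp_log (one_sub_one_div_pos hc)]
  field_simp

lemma exp_sub_exp_le_sub {x y : ℝ} (hxy : x ≤ y) (hy : y ≤ 0) : exp y - exp x ≤ y - x := by
  have hsplit : exp y * exp (x - y) = exp x := by rw [← exp_add]; ring_nf
  have hlin : 1 - (y - x) ≤ exp (x - y) := by simpa using one_sub_le_exp_neg (y - x)
  nlinarith [exp_le_one_iff.2 hy, exp_pos y]

end Real

lemma gFun_eq {N : ℕ} (hN : 2 ≤ N) (s : ℝ) :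
    gFun N s = s - 1 - (N - 1) * (1 - exp ((s - 1) * log (1 - 1 / (N : ℝ)))) := by
  have hsplit : exp (s * log (1 - 1 / (N : ℝ))) =
      exp (log (1 - 1 / (N : ℝ))) * exp ((s - 1) * log (1 - 1 / (N : ℝ))) := by
    rw [← exp_add]; ring_nf
  rw [gFun, hsplit, ← mul_assoc, mul_exp_log_one_sub_one_div (Nat.one_lt_cast.2 hN)]
  ring

lemma gFun_one {N : ℕ} (hN : 2 ≤ N) : gFun N 1 = 0 := by
  simp [gFun_eq hN]

lemma gFun_le_sq_div {N : ℕ} (hN : 2 ≤ N) {s : ℝ} (hs : 0 ≤ s) :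
    gFun N s ≤ s ^ 2 / (2 * N) := by
  have hN0 : (0 : ℝ) < N := by positivity
  have hexp : exp (s * log (1 - 1 / (N : ℝ))) ≤ exp (-(s / N)) := by
    gcongr
    calc s * log (1 - 1 / (N : ℝ)) ≤ s * -(1 / N) := by
          gcongr; exact log_one_sub_one_div_le (Nat.one_lt_cast.2 hN)
      _ = -(s / N) := by ring
  calc gFun N s ≤ s - N + N * (1 - s / N + (s / N) ^ 2 / 2) := by
        rw [gFun]
        gcongr
        exact hexp.trans (exp_neg_le_one_sub_add_sq_div_two (by positivity))
    _ = s ^ 2 / (2 * N) := by field_simp; ring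

lemma gFun_strictMonoOn {N : ℕ} (hN : 2 ≤ N) : StrictMonoOn (gFun N) (Ici 1) := by
  intro s hs t ht hst
  simp only [mem_Ici] at hs ht
  set ℓ := log (1 - 1 / (N : ℝ))
  have hN1 : (1 : ℝ) < N := Nat.one_lt_cast.2 hN
  have hℓ : ℓ < 0 := (log_one_sub_one_div_le hN1).trans_lt (neg_neg_of_pos (by positivity))
  have hlip : exp ((s - 1) * ℓ) - exp ((t - 1) * ℓ) ≤ (t - s) * -ℓ := by
    have := exp_sub_exp_le_sub (x := (t - 1) * ℓ) (y := (s - 1) * ℓ)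
      (by nlinarith) (by nlinarith)
    linarith
  have hslope : 0 < (t - s) * (1 + (N - 1) * ℓ) :=
    mul_pos (by linarith) (by linarith [neg_one_lt_sub_one_mul_log_one_sub_one_div hN1])
  rw [gFun_eq hN, gFun_eq hN]
  nlinarith

lemma gFun_nonneg {N : ℕ} (hN : 2 ≤ N) {s : ℝ} (hs : 1 ≤ s) : 0 ≤ gFun N s :=
  gFun_one hN ▸ (gFun_strictMonoOn hN).monotoneOn self_mem_Ici hs hs

lemma sq_div_le_gFun {N : ℕ} (hN : 2 ≤ N) {s : ℝ} (hs : 1 ≤ s) (hsN : s ≤ N) :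
    (s - 1) ^ 2 / (8 * N) ≤ gFun N s := by
  set ℓ := log (1 - 1 / (N : ℝ))
  have hN1 : (1 : ℝ) < N := Nat.one_lt_cast.2 hN
  have hN2 : (2 : ℝ) ≤ N := by exact_mod_cast hN
  have hℓ : 1 / N ≤ -ℓ := by linarith [log_one_sub_one_div_le hN1]
  have hℓN : -1 < (N - 1) * ℓ := neg_one_lt_sub_one_mul_log_one_sub_one_div hN1
  have hℓsq : (1 / N) ^ 2 ≤ ℓ ^ 2 := by
    rw [← neg_sq ℓ]; exact pow_le_pow_left₀ (by positivity) hℓ 2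
  have hy : -((s - 1) * ℓ) ≤ 2 := by nlinarith
  calc (s - 1) ^ 2 / (8 * N) = N / 2 * (s - 1) ^ 2 * (1 / N) ^ 2 / 4 := by field_simp; ring
    _ ≤ (N - 1) * (s - 1) ^ 2 * ℓ ^ 2 / 4 := by gcongr; linarith
    _ ≤ (s - 1) * (1 + (N - 1) * ℓ) + (N - 1) * (s - 1) ^ 2 * ℓ ^ 2 / 4 := by
      have : 0 ≤ (s - 1) * (1 + (N - 1) * ℓ) := mul_nonneg (by linarith) (by linarith)
      linarith
    _ = s - 1 - (N - 1) * (1 - (1 - -((s - 1) * ℓ) + (-((s - 1) * ℓ)) ^ 2 / 4)) := by ring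
    _ ≤ s - 1 - (N - 1) * (1 - exp (-(-((s - 1) * ℓ)))) := by
      gcongr
      exact one_sub_add_sq_div_four_le_exp_neg hy
    _ = gFun N s := by rw [neg_neg, gFun_eq hN]

/-- (i) there is a constant `χ > 0` (independent of `N`) such that for every `N ≥ 2` and every
real `1 ≤ s ≤ N`, `g_N(s) ≥ (s−1)²/(χN)`; (ii) for every `N ≥ 2` and every real `s ≥ 0`,
`g_N(s) ≤ s²/(2N)`. In particular `g_N` is nonnegative and (strictly) increasing on `[1, ∞)`. -/
theorem gFun_bounds :
    (∃ χ : ℝ, 0 < χ ∧ ∀ N : ℕ, 2 ≤ N → ∀ s : ℝ, 1 ≤ s → s ≤ (N : ℝ) →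
        (s - 1) ^ 2 / (χ * N) ≤ gFun N s) ∧
    (∀ N : ℕ, 2 ≤ N → ∀ s : ℝ, 0 ≤ s → gFun N s ≤ s ^ 2 / (2 * N)) ∧
    (∀ N : ℕ, 2 ≤ N → ∀ s : ℝ, 1 ≤ s → 0 ≤ gFun N s) ∧
    (∀ N : ℕ, 2 ≤ N → StrictMonoOn (gFun N) (Set.Ici (1 : ℝ))) :=
  ⟨⟨8, by norm_num, fun _ hN _ hs hsN => sq_div_le_gFun hN hs hsN⟩,
    fun _ hN _ hs => gFun_le_sq_div hN hs,
    fun _ hN _ hs => gFun_nonneg hN hs,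
    fun _ hN => gFun_strictMonoOn hN⟩
end
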